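/- arXiv:1005.4508 — 6 statements merged into one kernel-verified Lean document; each statement's English description precedes it below -/
import Mathlib

section
/- In the cut-free Dolev-Yao sequent calculus, if Γ, ⟨X,Y⟩ ⊢ M is derivable, then Γ, X, Y ⊢ M is derivable (pairs on the left can be decomposed). -/
/-- Ground Dolev-Yao messages: names, pairing and symmetric encryption. -/
inductive Msg : Type
  | name : ℕ → Msg
  | pair : Msg → Msg → Msg
  | enc  : Msg → Msg → Msg
  deriving DecidableEq

open Msg

/-- The cut-free Dolev-Yao sequent calculus (rules id, p_L, p_R, e_L, e_R). -/
inductive SC : Set Msg → Msg → Prop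
  | id {Γ M} : M ∈ Γ → SC Γ M
  | pR {Γ M N} : SC Γ M → SC Γ N → SC Γ (pair M N)
  | eR {Γ M K} : SC Γ M → SC Γ K → SC Γ (enc M K)
  | pL {Γ M N T} : pair M N ∈ Γ →
      SC (insert M (insert N Γ)) T → SC Γ T
  | eL {Γ M K T} : enc M K ∈ Γ → SC Γ K →
      SC (insert M (insert K Γ)) T → SC Γ T

lemma SC.pair_elim {X Y : Msg} {Γ : Set Msg} {M : Msg} (h : SC Γ M) :
    ∀ Δ : Set Msg, Γ ⊆ insert (pair X Y) Δ → X ∈ Δ → Y ∈ Δ → SC Δ M := by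
  induction h with
  | id hM =>
    intro Δ hsub hX hY
    rcases hsub hM with h | h
    · subst h; exact SC.pR (SC.id hX) (SC.id hY)
    · exact SC.id h
  | pR _ _ ih1 ih2 =>
    intro Δ hsub hX hY; exact SC.pR (ih1 Δ hsub hX hY) (ih2 Δ hsub hX hY)
  | eR _ _ ih1 ih2 =>
    intro Δ hsub hX hY; exact SC.eR (ih1 Δ hsub hX hY) (ih2 Δ hsub hX hY)
  | @pL Γ' M' N' T hmem _ ih =>
    intro Δ hsub hX hY
    rcases hsub hmem with h | h
    · obtain ⟨rfl, rfl⟩ : M' = X ∧ N' = Y := by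
        injection h with h1 h2; exact ⟨h1, h2⟩
      refine ih Δ ?_ hX hY
      intro A hA
      rcases hA with rfl | rfl | hA
      · exact Or.inr hX
      · exact Or.inr hY
      · exact hsub hA
    · refine SC.pL h (ih (insert M' (insert N' Δ)) ?_ ?_ ?_)
      · intro A hA
        rcases hA with rfl | rfl | hA
        · exact Or.inr (Or.inl rfl)
        · exact Or.inr (Or.inr (Or.inl rfl))
        · rcases hsub hA with h' | h'
          · exact Or.inl h'
          · exact Or.inr (Or.inr (Or.inr h'))
      · exact Or.inr (Or.inr hX)
      · exact Or.inr (Or.inr hY)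
  | @eL Γ' M' K T hmem _ _ ihK ih =>
    intro Δ hsub hX hY
    rcases hsub hmem with h | h
    · exact absurd h (by simp)
    · refine SC.eL h (ihK Δ hsub hX hY) (ih (insert M' (insert K Δ)) ?_ ?_ ?_)
      · intro A hA
        rcases hA with rfl | rfl | hA
        · exact Or.inr (Or.inl rfl)
        · exact Or.inr (Or.inr (Or.inl rfl))
        · rcases hsub hA with h' | h'
          · exact Or.inl h'
          · exact Or.inr (Or.inr (Or.inr h'))
      · exact Or.inr (Or.inr hX)
      · exact Or.inr (Or.inr hY)

/-- Pairs on the left can be decomposed in the cut-free calculus. -/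
theorem pair_left_decomposition (Γ : Set Msg) (X Y M : Msg)
    (h : SC (insert (pair X Y) Γ) M) : SC (insert X (insert Y Γ)) M := by
  refine h.pair_elim _ ?_ (Or.inl rfl) (Or.inr (Or.inl rfl))
  intro A hA
  rcases hA with rfl | hA
  · exact Or.inl rfl
  · exact Or.inr (Or.inr (Or.inr hA))
end

section
/- In the cut-free Dolev-Yao sequent calculus, if Γ, {X}Y ⊢ M is derivable and Γ ⊢ Y is derivable, then Γ, X, Y ⊢ M is derivable. -/
open Msg

lemma SC.weak {Γ Δ : Set Msg} {M : Msg} (h : SC Γ M) (hs : Γ ⊆ Δ) : SC Δ M := by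
  induction h generalizing Δ with
  | id hm => exact SC.id (hs hm)
  | pR _ _ ih1 ih2 => exact SC.pR (ih1 hs) (ih2 hs)
  | eR _ _ ih1 ih2 => exact SC.eR (ih1 hs) (ih2 hs)
  | pL hm _ ih =>
      exact SC.pL (hs hm) (ih (Set.insert_subset_insert (Set.insert_subset_insert hs)))
  | eL hm _ _ ihk ihbody =>
      exact SC.eL (hs hm) (ihk hs) (ihbody (Set.insert_subset_insert (Set.insert_subset_insert hs)))

lemma SC.main (X Y : Msg) {Δ : Set Msg} {M : Msg} (h : SC Δ M) :
    ∀ Γ : Set Msg, Δ = insert (enc X Y) Γ → SC Γ Y → SC (insert X (insert Y Γ)) M := by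
  induction h with
  | @id _ M hm =>
      intro Γ hΔ hk
      subst hΔ
      rcases hm with hm | hm
      · subst hm
        exact SC.eR (SC.id (by simp)) (SC.id (by simp))
      · exact SC.id (by simp [hm])
  | pR _ _ ih1 ih2 =>
      intro Γ hΔ hk
      exact SC.pR (ih1 Γ hΔ hk) (ih2 Γ hΔ hk)
  | eR _ _ ih1 ih2 =>
      intro Γ hΔ hk
      exact SC.eR (ih1 Γ hΔ hk) (ih2 Γ hΔ hk)
  | @pL _ P Q _ hm _ ih =>
      intro Γ hΔ hk
      subst hΔ
      rcases hm with hm | hm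
      · exact absurd hm (by simp)
      · have h1 : SC (insert X (insert Y (insert P (insert Q Γ)))) _ :=
          ih (insert P (insert Q Γ))
            (by ext x; simp; tauto)
            (hk.weak (by intro x hx; simp [hx]))
        refine SC.pL (M := P) (N := Q) (by simp [hm]) (h1.weak ?_)
        intro x hx; simp at hx ⊢; tauto
  | @eL _ P K _ hm _ _ ih1 ih2 =>
      intro Γ hΔ hk
      subst hΔ
      rcases hm with hm | hm
      · injection hm with h1 h2
        subst h1; subst h2
        have h2 : SC (insert P (insert K (insert P (insert K Γ)))) _ :=
          ih2 (insert P (insert K Γ))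
            (by ext x; simp; tauto)
            (hk.weak (by intro x hx; simp [hx]))
        exact h2.weak (by intro x hx; simp at hx ⊢; tauto)
      · have hkey' : SC (insert X (insert Y Γ)) K := ih1 Γ rfl hk
        have h2 : SC (insert X (insert Y (insert P (insert K Γ)))) _ :=
          ih2 (insert P (insert K Γ))
            (by ext x; simp; tauto)
            (hk.weak (by intro x hx; simp [hx]))
        refine SC.eL (M := P) (K := K) (by simp [hm]) hkey' (h2.weak ?_)
        intro x hx; simp at hx ⊢; tauto

/-- Encryptions on the left can be decomposed, given the key. -/
theorem enc_left_decomposition (Γ : Set Msg) (X Y M : Msg)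
    (h : SC (insert (enc X Y) Γ) M) (hk : SC Γ Y) :
    SC (insert X (insert Y Γ)) M := SC.main X Y h Γ rfl hk
end

section
/- The cut rule is admissible for the Dolev-Yao sequent calculus: if Γ ⊢ M and Γ, M ⊢ N are both derivable in the cut-free system, then Γ ⊢ N is derivable in the cut-free system. -/
open Msg

/-- Height-indexed version of the cut-free calculus. -/
inductive SCn : ℕ → Set Msg → Msg → Prop
  | id {n Γ M} : M ∈ Γ → SCn n Γ M
  | pR {n Γ M N} : SCn n Γ M → SCn n Γ N → SCn (n+1) Γ (pair M N)
  | eR {n Γ M K} : SCn n Γ M → SCn n Γ K → SCn (n+1) Γ (enc M K)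
  | pL {n Γ M N T} : pair M N ∈ Γ →
      SCn n (insert M (insert N Γ)) T → SCn (n+1) Γ T
  | eL {n Γ M K T} : enc M K ∈ Γ → SCn n Γ K →
      SCn n (insert M (insert K Γ)) T → SCn (n+1) Γ T

theorem SCn.mono {n Γ T} (h : SCn n Γ T) : ∀ m, n ≤ m → SCn m Γ T := by
  induction h with
  | id h => exact fun m _ => SCn.id h
  | pR _ _ iha ihb =>
      intro m hm
      obtain ⟨m', rfl⟩ : ∃ m', m = m' + 1 := ⟨m - 1, by omega⟩
      exact SCn.pR (iha m' (by omega)) (ihb m' (by omega))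
  | eR _ _ iha ihb =>
      intro m hm
      obtain ⟨m', rfl⟩ : ∃ m', m = m' + 1 := ⟨m - 1, by omega⟩
      exact SCn.eR (iha m' (by omega)) (ihb m' (by omega))
  | pL hmem _ ih =>
      intro m hm
      obtain ⟨m', rfl⟩ : ∃ m', m = m' + 1 := ⟨m - 1, by omega⟩
      exact SCn.pL hmem (ih m' (by omega))
  | eL hmem _ _ ihk ih =>
      intro m hm
      obtain ⟨m', rfl⟩ : ∃ m', m = m' + 1 := ⟨m - 1, by omega⟩
      exact SCn.eL hmem (ihk m' (by omega)) (ih m' (by omega))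

theorem SCn.weaken {n Γ T} (h : SCn n Γ T) : ∀ Γ', Γ ⊆ Γ' → SCn n Γ' T := by
  induction h with
  | id h => exact fun Γ' hs => SCn.id (hs h)
  | pR _ _ iha ihb => exact fun Γ' hs => SCn.pR (iha Γ' hs) (ihb Γ' hs)
  | eR _ _ iha ihb => exact fun Γ' hs => SCn.eR (iha Γ' hs) (ihb Γ' hs)
  | pL hmem _ ih =>
      exact fun Γ' hs => SCn.pL (hs hmem)
        (ih _ (Set.insert_subset_insert (Set.insert_subset_insert hs)))
  | eL hmem _ _ ihk ih =>
      exact fun Γ' hs => SCn.eL (hs hmem) (ihk Γ' hs)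
        (ih _ (Set.insert_subset_insert (Set.insert_subset_insert hs)))

theorem SC_of_SCn {n Γ T} (h : SCn n Γ T) : SC Γ T := by
  induction h with
  | id h => exact SC.id h
  | pR _ _ iha ihb => exact SC.pR iha ihb
  | eR _ _ iha ihb => exact SC.eR iha ihb
  | pL hmem _ ih => exact SC.pL hmem ih
  | eL hmem _ _ ihk ih => exact SC.eL hmem ihk ih

theorem SCn_of_SC {Γ T} (h : SC Γ T) : ∃ n, SCn n Γ T := by
  induction h with
  | id h => exact ⟨0, SCn.id h⟩
  | pR _ _ iha ihb =>
      obtain ⟨a, ha⟩ := iha; obtain ⟨b, hb⟩ := ihb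
      exact ⟨max a b + 1, SCn.pR (ha.mono _ (le_max_left _ _)) (hb.mono _ (le_max_right _ _))⟩
  | eR _ _ iha ihb =>
      obtain ⟨a, ha⟩ := iha; obtain ⟨b, hb⟩ := ihb
      exact ⟨max a b + 1, SCn.eR (ha.mono _ (le_max_left _ _)) (hb.mono _ (le_max_right _ _))⟩
  | pL hmem _ ih =>
      obtain ⟨a, ha⟩ := ih
      exact ⟨a + 1, SCn.pL hmem ha⟩
  | eL hmem _ _ ihk ih =>
      obtain ⟨a, ha⟩ := ihk; obtain ⟨b, hb⟩ := ih
      exact ⟨max a b + 1, SCn.eL hmem (ha.mono _ (le_max_left _ _)) (hb.mono _ (le_max_right _ _))⟩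

/-- Size of a message. -/
def msize : Msg → ℕ
  | name _ => 0
  | pair a b => msize a + msize b + 1
  | enc a b => msize a + msize b + 1

theorem insert_comm3 (A B M : Msg) (Γ : Set Msg) :
    insert A (insert B (insert M Γ)) = insert M (insert A (insert B Γ)) := by
  rw [Set.insert_comm B M, Set.insert_comm A M]

theorem cut_aux : ∀ (s : ℕ) (M : Msg), msize M ≤ s →
    ∀ (n₂ : ℕ), ∀ (n₁ : ℕ) (Γ : Set Msg) (N : Msg),
      SCn n₁ Γ M → SCn n₂ (insert M Γ) N → SC Γ N := by
  intro s
  induction s using Nat.strong_induction_on with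
  | _ s IHs =>
  intro M hM n₂
  induction n₂ using Nat.strong_induction_on with
  | _ n₂ IH2 =>
  intro n₁
  induction n₁ using Nat.strong_induction_on with
  | _ n₁ IH1 =>
  intro Γ N h₁ h₂
  by_cases hMΓ : M ∈ Γ
  · rw [Set.insert_eq_self.2 hMΓ] at h₂
    exact SC_of_SCn h₂
  have h₂0 := h₂
  cases h₂ with
  | id hN =>
      rcases hN with rfl | hN
      · exact SC_of_SCn h₁
      · exact SC.id hN
  | @pR m _ N₁ N₂ ha hb =>
      exact SC.pR (IH2 m (by omega) n₁ Γ N₁ h₁ ha) (IH2 m (by omega) n₁ Γ N₂ h₁ hb)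
  | @eR m _ N₁ N₂ ha hb =>
      exact SC.eR (IH2 m (by omega) n₁ Γ N₁ h₁ ha) (IH2 m (by omega) n₁ Γ N₂ h₁ hb)
  | @pL m _ A B _ hmem prem =>
      rw [insert_comm3] at prem
      rcases hmem with heq | hmem
      · -- M = pair A B : principal case
        subst heq
        cases h₁ with
        | id h => exact absurd h hMΓ
        | @pR m₁ _ _ _ hA hB =>
            have h₁' : SCn 1 (insert A (insert B Γ)) (pair A B) :=
              SCn.pR (SCn.id (Set.mem_insert _ _))
                (SCn.id (Set.mem_insert_of_mem _ (Set.mem_insert _ _)))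
            have step1 : SC (insert A (insert B Γ)) N :=
              IH2 m (by omega) 1 _ N h₁' prem
            -- cut A, then cut B
            obtain ⟨k₁, hk₁⟩ := SCn_of_SC step1
            have hA' : SCn m₁ (insert B Γ) A :=
              hA.weaken _ (Set.subset_insert _ _)
            have step2 : SC (insert B Γ) N :=
              IHs (msize A) (by simp [msize] at hM ⊢; omega) A le_rfl k₁ m₁ _ N hA' hk₁
            obtain ⟨k₂, hk₂⟩ := SCn_of_SC step2
            exact IHs (msize B) (by simp [msize] at hM ⊢; omega) B le_rfl k₂ m₁ Γ N hB hk₂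
        | @pL m₁ _ C D _ hmem₁ prem₁ =>
            refine SC.pL hmem₁ ?_
            have h₂' : SCn (m+1) (insert (pair A B) (insert C (insert D Γ))) N :=
              h₂0.weaken _ (Set.insert_subset_insert
                (Set.subset_insert _ _ |>.trans (Set.subset_insert _ _)))
            exact IH1 m₁ (by omega) _ N prem₁ h₂'
        | @eL m₁ _ C K _ hmem₁ hK₁ prem₁ =>
            refine SC.eL hmem₁ (SC_of_SCn hK₁) ?_
            have h₂' : SCn (m+1) (insert (pair A B) (insert C (insert K Γ))) N :=
              h₂0.weaken _ (Set.insert_subset_insert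
                (Set.subset_insert _ _ |>.trans (Set.subset_insert _ _)))
            exact IH1 m₁ (by omega) _ N prem₁ h₂'
      · -- pair A B ∈ Γ : commute on the right
        refine SC.pL hmem ?_
        have h₁' : SCn n₁ (insert A (insert B Γ)) M :=
          h₁.weaken _ (Set.subset_insert _ _ |>.trans (Set.subset_insert _ _))
        exact IH2 m (by omega) n₁ _ N h₁' prem
  | @eL m _ A K _ hmem hK prem =>
      rw [insert_comm3] at prem
      rcases hmem with heq | hmem
      · -- M = enc A K : principal case
        subst heq
        cases h₁ with
        | id h => exact absurd h hMΓ
        | @eR m₁ _ _ _ hA hB =>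
            have h₁' : SCn 1 (insert A (insert K Γ)) (enc A K) :=
              SCn.eR (SCn.id (Set.mem_insert _ _))
                (SCn.id (Set.mem_insert_of_mem _ (Set.mem_insert _ _)))
            have step1 : SC (insert A (insert K Γ)) N :=
              IH2 m (by omega) 1 _ N h₁' prem
            obtain ⟨k₁, hk₁⟩ := SCn_of_SC step1
            have hA' : SCn m₁ (insert K Γ) A :=
              hA.weaken _ (Set.subset_insert _ _)
            have step2 : SC (insert K Γ) N :=
              IHs (msize A) (by simp [msize] at hM ⊢; omega) A le_rfl k₁ m₁ _ N hA' hk₁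
            obtain ⟨k₂, hk₂⟩ := SCn_of_SC step2
            exact IHs (msize K) (by simp [msize] at hM ⊢; omega) K le_rfl k₂ m₁ Γ N hB hk₂
        | @pL m₁ _ C D _ hmem₁ prem₁ =>
            refine SC.pL hmem₁ ?_
            have h₂' : SCn (m+1) (insert (enc A K) (insert C (insert D Γ))) N :=
              h₂0.weaken _ (Set.insert_subset_insert
                (Set.subset_insert _ _ |>.trans (Set.subset_insert _ _)))
            exact IH1 m₁ (by omega) _ N prem₁ h₂'
        | @eL m₁ _ C K' _ hmem₁ hK₁ prem₁ =>
            refine SC.eL hmem₁ (SC_of_SCn hK₁) ?_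
            have h₂' : SCn (m+1) (insert (enc A K) (insert C (insert K' Γ))) N :=
              h₂0.weaken _ (Set.insert_subset_insert
                (Set.subset_insert _ _ |>.trans (Set.subset_insert _ _)))
            exact IH1 m₁ (by omega) _ N prem₁ h₂'
      · -- enc A K ∈ Γ : commute on the right
        refine SC.eL hmem ?_ ?_
        · exact IH2 m (by omega) n₁ Γ K h₁ hK
        · have h₁' : SCn n₁ (insert A (insert K Γ)) M :=
            h₁.weaken _ (Set.subset_insert _ _ |>.trans (Set.subset_insert _ _))
          exact IH2 m (by omega) n₁ _ N h₁' prem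

/-- The cut rule is admissible for the cut-free Dolev-Yao sequent calculus. -/
theorem cut_admissible (Γ : Set Msg) (M N : Msg)
    (h₁ : SC Γ M) (h₂ : SC (insert M Γ) N) : SC Γ N := by
  obtain ⟨n₁, h₁'⟩ := SCn_of_SC h₁
  obtain ⟨n₂, h₂'⟩ := SCn_of_SC h₂
  exact cut_aux (msize M) M le_rfl n₂ n₁ Γ N h₁' h₂'
end

section
/- If Γ ⊢ M is derivable in the cut-free Dolev-Yao sequent calculus, then it has a normal derivation: a cut-free derivation in which no left rule (p_L or e_L) appears above a right rule (p_R or e_R), and no left rule appears immediately above the left premise of an e_L rule. -/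
open Msg

/-- Derivations (proof trees) in the cut-free Dolev-Yao sequent calculus. -/
inductive Deriv : Set Msg → Msg → Type
  | id {Γ M} : M ∈ Γ → Deriv Γ M
  | pR {Γ M N} : Deriv Γ M → Deriv Γ N → Deriv Γ (pair M N)
  | eR {Γ M K} : Deriv Γ M → Deriv Γ K → Deriv Γ (enc M K)
  | pL {Γ M N T} : pair M N ∈ Γ →
      Deriv (insert M (insert N Γ)) T → Deriv Γ T
  | eL {Γ M K T} : enc M K ∈ Γ → Deriv Γ K →
      Deriv (insert M (insert K Γ)) T → Deriv Γ T

/-- A derivation contains no left rule (p_L or e_L) at all. -/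
def leftFree : ∀ {Γ M}, Deriv Γ M → Prop
  | _, _, .id _ => True
  | _, _, .pR d e => leftFree d ∧ leftFree e
  | _, _, .eR d e => leftFree d ∧ leftFree e
  | _, _, .pL _ _ => False
  | _, _, .eL _ _ _ => False

/-- The last rule of a derivation is a left rule. -/
def endsWithLeft : ∀ {Γ M}, Deriv Γ M → Prop
  | _, _, .id _ => False
  | _, _, .pR _ _ => False
  | _, _, .eR _ _ => False
  | _, _, .pL _ _ => True
  | _, _, .eL _ _ _ => True

/-- Normal derivations: no left rule appears above a right rule, and no left
rule appears immediately above the left premise of an e_L rule. -/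
def normal : ∀ {Γ M}, Deriv Γ M → Prop
  | _, _, .id _ => True
  | _, _, .pR d e => leftFree d ∧ leftFree e
  | _, _, .eR d e => leftFree d ∧ leftFree e
  | _, _, .pL _ d => normal d
  | _, _, .eL _ d e => normal d ∧ ¬ endsWithLeft d ∧ normal e

/-- Weakening: enlarge the context of a derivation. -/
def Deriv.wk : ∀ {Γ M}, Deriv Γ M → ∀ {Δ : Set Msg}, Γ ⊆ Δ → Deriv Δ M
  | _, _, .id h, _, s => .id (s h)
  | _, _, .pR d e, _, s => .pR (d.wk s) (e.wk s)
  | _, _, .eR d e, _, s => .eR (d.wk s) (e.wk s)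
  | _, _, .pL h d, _, s =>
      .pL (s h) (d.wk (Set.insert_subset_insert (Set.insert_subset_insert s)))
  | _, _, .eL h k d, _, s =>
      .eL (s h) (k.wk s) (d.wk (Set.insert_subset_insert (Set.insert_subset_insert s)))

lemma leftFree_wk {Γ M} (d : Deriv Γ M) : ∀ {Δ} (s : Γ ⊆ Δ), leftFree d → leftFree (d.wk s) := by
  induction d with
  | id h => intro Δ s _; trivial
  | pR d e ihd ihe => intro Δ s hh; exact ⟨ihd s hh.1, ihe s hh.2⟩
  | eR d e ihd ihe => intro Δ s hh; exact ⟨ihd s hh.1, ihe s hh.2⟩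
  | pL h d ih => intro Δ s hh; exact hh.elim
  | eL h k d ihk ih => intro Δ s hh; exact hh.elim

lemma endsWithLeft_wk {Γ M} (d : Deriv Γ M) {Δ} (s : Γ ⊆ Δ) :
    endsWithLeft (d.wk s) → endsWithLeft d := by
  cases d <;> simp [Deriv.wk, endsWithLeft]

lemma normal_wk {Γ M} (d : Deriv Γ M) : ∀ {Δ} (s : Γ ⊆ Δ), normal d → normal (d.wk s) := by
  induction d with
  | id h => intro Δ s _; trivial
  | pR d e ihd ihe => intro Δ s hh; exact ⟨leftFree_wk d s hh.1, leftFree_wk e s hh.2⟩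
  | eR d e ihd ihe => intro Δ s hh; exact ⟨leftFree_wk d s hh.1, leftFree_wk e s hh.2⟩
  | pL h d ih => intro Δ s hh; exact ih _ hh
  | eL h k d ihk ih =>
      intro Δ s hh
      exact ⟨ihk s hh.1, fun hc => hh.2.1 (endsWithLeft_wk k s hc), ih _ hh.2.2⟩

lemma leftFree_notEnd {Γ M} {d : Deriv Γ M} (h : leftFree d) : ¬ endsWithLeft d := by
  cases d <;> simp [endsWithLeft] <;> exact h

lemma leftFree_normal {Γ M} {d : Deriv Γ M} (h : leftFree d) : normal d := by
  cases d <;> first | exact h | trivial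

/-- Normal derivability. -/
def ND (Γ : Set Msg) (M : Msg) : Prop := ∃ d : Deriv Γ M, normal d

lemma ND_mono {Γ Δ M} (s : Γ ⊆ Δ) : ND Γ M → ND Δ M
  | ⟨d, hd⟩ => ⟨d.wk s, normal_wk d s hd⟩

lemma sub2 {A B : Msg} {Γ : Set Msg} : Γ ⊆ insert A (insert B Γ) :=
  (Set.subset_insert _ _).trans (Set.subset_insert _ _)

lemma ND_pR_aux {Γ N} (e : Deriv Γ N) : normal e →
    ∀ {M}, (∃ dm : Deriv Γ M, leftFree dm) → ND Γ (Msg.pair M N) := by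
  induction e with
  | id h => rintro _ M ⟨dm, hm⟩; exact ⟨.pR dm (.id h), hm, trivial⟩
  | pR e1 e2 _ _ => rintro he M ⟨dm, hm⟩; exact ⟨.pR dm (.pR e1 e2), hm, he⟩
  | eR e1 e2 _ _ => rintro he M ⟨dm, hm⟩; exact ⟨.pR dm (.eR e1 e2), hm, he⟩
  | pL h e' ih =>
      rintro he M ⟨dm, hm⟩
      obtain ⟨d, hd⟩ := ih he ⟨dm.wk sub2, leftFree_wk dm sub2 hm⟩
      exact ⟨.pL h d, hd⟩
  | eL h k e' _ ih =>
      rintro he M ⟨dm, hm⟩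
      obtain ⟨d, hd⟩ := ih he.2.2 ⟨dm.wk sub2, leftFree_wk dm sub2 hm⟩
      exact ⟨.eL h k d, he.1, he.2.1, hd⟩

lemma ND_eR_aux {Γ N} (e : Deriv Γ N) : normal e →
    ∀ {M}, (∃ dm : Deriv Γ M, leftFree dm) → ND Γ (Msg.enc M N) := by
  induction e with
  | id h => rintro _ M ⟨dm, hm⟩; exact ⟨.eR dm (.id h), hm, trivial⟩
  | pR e1 e2 _ _ => rintro he M ⟨dm, hm⟩; exact ⟨.eR dm (.pR e1 e2), hm, he⟩
  | eR e1 e2 _ _ => rintro he M ⟨dm, hm⟩; exact ⟨.eR dm (.eR e1 e2), hm, he⟩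
  | pL h e' ih =>
      rintro he M ⟨dm, hm⟩
      obtain ⟨d, hd⟩ := ih he ⟨dm.wk sub2, leftFree_wk dm sub2 hm⟩
      exact ⟨.pL h d, hd⟩
  | eL h k e' _ ih =>
      rintro he M ⟨dm, hm⟩
      obtain ⟨d, hd⟩ := ih he.2.2 ⟨dm.wk sub2, leftFree_wk dm sub2 hm⟩
      exact ⟨.eL h k d, he.1, he.2.1, hd⟩

lemma ND_pair {Γ M} (d : Deriv Γ M) : normal d → ∀ {N}, ND Γ N → ND Γ (Msg.pair M N) := by
  induction d with
  | id h => rintro _ N ⟨e, he⟩; exact ND_pR_aux e he ⟨.id h, trivial⟩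
  | pR d1 d2 _ _ => rintro hd N ⟨e, he⟩; exact ND_pR_aux e he ⟨.pR d1 d2, hd⟩
  | eR d1 d2 _ _ => rintro hd N ⟨e, he⟩; exact ND_pR_aux e he ⟨.eR d1 d2, hd⟩
  | pL h d' ih =>
      intro hd N hN
      obtain ⟨d, hdd⟩ := ih hd (ND_mono sub2 hN)
      exact ⟨.pL h d, hdd⟩
  | eL h k d' _ ih =>
      intro hd N hN
      obtain ⟨d, hdd⟩ := ih hd.2.2 (ND_mono sub2 hN)
      exact ⟨.eL h k d, hd.1, hd.2.1, hdd⟩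

lemma ND_enc {Γ M} (d : Deriv Γ M) : normal d → ∀ {N}, ND Γ N → ND Γ (Msg.enc M N) := by
  induction d with
  | id h => rintro _ N ⟨e, he⟩; exact ND_eR_aux e he ⟨.id h, trivial⟩
  | pR d1 d2 _ _ => rintro hd N ⟨e, he⟩; exact ND_eR_aux e he ⟨.pR d1 d2, hd⟩
  | eR d1 d2 _ _ => rintro hd N ⟨e, he⟩; exact ND_eR_aux e he ⟨.eR d1 d2, hd⟩
  | pL h d' ih =>
      intro hd N hN
      obtain ⟨d, hdd⟩ := ih hd (ND_mono sub2 hN)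
      exact ⟨.pL h d, hdd⟩
  | eL h k d' _ ih =>
      intro hd N hN
      obtain ⟨d, hdd⟩ := ih hd.2.2 (ND_mono sub2 hN)
      exact ⟨.eL h k d, hd.1, hd.2.1, hdd⟩

lemma ND_eL_key {Γ K} (k : Deriv Γ K) : normal k →
    ∀ {M T}, Msg.enc M K ∈ Γ → ND (insert M (insert K Γ)) T → ND Γ T := by
  induction k with
  | id h => rintro _ M T he ⟨dt, ht⟩; exact ⟨.eL he (.id h) dt, trivial, fun c => c, ht⟩
  | pR k1 k2 _ _ =>
      rintro hk M T he ⟨dt, ht⟩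
      exact ⟨.eL he (.pR k1 k2) dt, hk, fun c => c, ht⟩
  | eR k1 k2 _ _ =>
      rintro hk M T he ⟨dt, ht⟩
      exact ⟨.eL he (.eR k1 k2) dt, hk, fun c => c, ht⟩
  | pL h k' ih =>
      intro hk M T he ht
      obtain ⟨d, hd⟩ := ih hk (sub2 he)
        (ND_mono (Set.insert_subset_insert (Set.insert_subset_insert sub2)) ht)
      exact ⟨.pL h d, hd⟩
  | eL h kk k' _ ih =>
      intro hk M T he ht
      obtain ⟨d, hd⟩ := ih hk.2.2 (sub2 he)
        (ND_mono (Set.insert_subset_insert (Set.insert_subset_insert sub2)) ht)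
      exact ⟨.eL h kk d, hk.1, hk.2.1, hd⟩

/-- Every derivable sequent has a normal derivation. -/
theorem normalization (Γ : Set Msg) (M : Msg) (h : Nonempty (Deriv Γ M)) :
    ∃ d : Deriv Γ M, normal d := by
  obtain ⟨d⟩ := h
  induction d with
  | id h => exact ⟨.id h, trivial⟩
  | pR d e ihd ihe => obtain ⟨dm, hm⟩ := ihd; exact ND_pair dm hm ihe
  | eR d e ihd ihe => obtain ⟨dm, hm⟩ := ihd; exact ND_enc dm hm ihe
  | pL h d ih => obtain ⟨dd, hd⟩ := ih; exact ⟨.pL h dd, hd⟩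
  | eL h k d ihk ihd => obtain ⟨kk, hkk⟩ := ihk; exact ND_eL_key kk hkk h ihd
end

section
/- A sequent Γ ⊢ M is derivable in the Dolev-Yao sequent calculus if and only if it is derivable in the linear system L, whose rules are: (r) Γ ⊢ M if Γ ⊩_R M; (lp) from Γ, ⟨M,N⟩, M, N ⊢ T infer Γ, ⟨M,N⟩ ⊢ T; (le) from Γ, {M}K, M, K ⊢ T and the side condition Γ, {M}K ⊩_R K, infer Γ, {M}K ⊢ T; where Γ ⊩_R M denotes derivability using only the rules id, p_R and e_R. -/
open Msg

/-- Right-deducibility: derivability using only the rules id, p_R, e_R. -/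
inductive SCR : Set Msg → Msg → Prop
  | id {Γ M} : M ∈ Γ → SCR Γ M
  | pR {Γ M N} : SCR Γ M → SCR Γ N → SCR Γ (pair M N)
  | eR {Γ M K} : SCR Γ M → SCR Γ K → SCR Γ (enc M K)

/-- The linear system L. -/
inductive LSeq : Set Msg → Msg → Prop
  | r  {Γ M} : SCR Γ M → LSeq Γ M
  | lp {Γ M N T} : pair M N ∈ Γ →
      LSeq (insert M (insert N Γ)) T → LSeq Γ T
  | le {Γ M K T} : enc M K ∈ Γ → SCR Γ K →
      LSeq (insert M (insert K Γ)) T → LSeq Γ T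

lemma scr_mono {Γ Γ' : Set Msg} {T : Msg} (h : SCR Γ T) (hs : Γ ⊆ Γ') : SCR Γ' T := by
  induction h with
  | id hm => exact SCR.id (hs hm)
  | pR _ _ ih1 ih2 => exact SCR.pR ih1 ih2
  | eR _ _ ih1 ih2 => exact SCR.eR ih1 ih2

lemma lseq_mono {Γ Γ' : Set Msg} {T : Msg} (h : LSeq Γ T) (hs : Γ ⊆ Γ') : LSeq Γ' T := by
  induction h generalizing Γ' with
  | r h => exact LSeq.r (scr_mono h hs)
  | lp hm _ ih =>
      exact LSeq.lp (hs hm) (ih (Set.insert_subset_insert (Set.insert_subset_insert hs)))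
  | le hm hk _ ih =>
      exact LSeq.le (hs hm) (scr_mono hk hs)
        (ih (Set.insert_subset_insert (Set.insert_subset_insert hs)))

lemma scr_cut_scr {Δ Γ : Set Msg} {T : Msg} (h : SCR Δ T) (hall : ∀ X ∈ Δ, SCR Γ X) :
    SCR Γ T := by
  induction h with
  | id hm => exact hall _ hm
  | pR _ _ ih1 ih2 => exact SCR.pR ih1 ih2
  | eR _ _ ih1 ih2 => exact SCR.eR ih1 ih2

lemma scr_cut {Δ Γ : Set Msg} {T : Msg} (h : LSeq Δ T) (hall : ∀ X ∈ Δ, SCR Γ X) :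
    LSeq Γ T := by
  induction h generalizing Γ with
  | r h => exact LSeq.r (scr_cut_scr h hall)
  | @lp Δ M N T hm _ ih =>
      cases hall _ hm with
      | id hp =>
        refine LSeq.lp hp (ih ?_)
        intro X hX
        rcases hX with rfl | rfl | hX
        · exact SCR.id (Set.mem_insert _ _)
        · exact SCR.id (Set.mem_insert_of_mem _ (Set.mem_insert _ _))
        · exact scr_mono (hall _ hX)
            (fun y hy => Set.mem_insert_of_mem _ (Set.mem_insert_of_mem _ hy))
      | pR h1 h2 =>
        refine ih ?_
        intro X hX
        rcases hX with rfl | rfl | hX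
        · exact h1
        · exact h2
        · exact hall _ hX
  | @le Δ M K T hm hk _ ih =>
      have hK : SCR Γ K := scr_cut_scr hk hall
      cases hall _ hm with
      | id hp =>
        refine LSeq.le hp hK (ih ?_)
        intro X hX
        rcases hX with rfl | rfl | hX
        · exact SCR.id (Set.mem_insert _ _)
        · exact SCR.id (Set.mem_insert_of_mem _ (Set.mem_insert _ _))
        · exact scr_mono (hall _ hX)
            (fun y hy => Set.mem_insert_of_mem _ (Set.mem_insert_of_mem _ hy))
      | eR h1 h2 =>
        refine ih ?_
        intro X hX
        rcases hX with rfl | rfl | hX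
        · exact h1
        · exact h2
        · exact hall _ hX

lemma lseq_cut {Γ : Set Msg} {K T : Msg} (h1 : LSeq Γ K) (h2 : LSeq (insert K Γ) T) :
    LSeq Γ T := by
  induction h1 generalizing T with
  | r h => exact scr_cut h2 (by rintro X (rfl | hX); exacts [h, SCR.id hX])
  | @lp Γ' M N K hm _ ih =>
      refine LSeq.lp hm (ih (lseq_mono h2 ?_))
      exact Set.insert_subset_insert
        (fun y hy => Set.mem_insert_of_mem _ (Set.mem_insert_of_mem _ hy))
  | @le Γ' M Kk K hm hk _ ih =>
      refine LSeq.le hm hk (ih (lseq_mono h2 ?_))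
      exact Set.insert_subset_insert
        (fun y hy => Set.mem_insert_of_mem _ (Set.mem_insert_of_mem _ hy))

lemma scr_sc {Γ : Set Msg} {T : Msg} (h : SCR Γ T) : SC Γ T := by
  induction h with
  | id hm => exact SC.id hm
  | pR _ _ ih1 ih2 => exact SC.pR ih1 ih2
  | eR _ _ ih1 ih2 => exact SC.eR ih1 ih2

/-- A sequent is derivable in the Dolev-Yao sequent calculus iff it is
derivable in the linear system L. -/
theorem seq_iff_linear (Γ : Set Msg) (M : Msg) : SC Γ M ↔ LSeq Γ M := by
  constructor
  · intro h
    induction h with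
    | id hm => exact LSeq.r (SCR.id hm)
    | @pR Γ M N _ _ ih1 ih2 =>
        refine lseq_cut ih2 (lseq_cut (lseq_mono ih1 (Set.subset_insert _ _)) ?_)
        exact LSeq.r (SCR.pR (SCR.id (Set.mem_insert _ _))
          (SCR.id (Set.mem_insert_of_mem _ (Set.mem_insert _ _))))
    | @eR Γ M K _ _ ih1 ih2 =>
        refine lseq_cut ih2 (lseq_cut (lseq_mono ih1 (Set.subset_insert _ _)) ?_)
        exact LSeq.r (SCR.eR (SCR.id (Set.mem_insert _ _))
          (SCR.id (Set.mem_insert_of_mem _ (Set.mem_insert _ _))))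
    | pL hm _ ih => exact LSeq.lp hm ih
    | @eL Γ M K T hm _ _ ihk ih =>
        refine lseq_cut ihk ?_
        refine LSeq.le (Set.mem_insert_of_mem _ hm) (SCR.id (Set.mem_insert _ _))
          (lseq_mono ih ?_)
        exact Set.insert_subset_insert (Set.insert_subset_insert (Set.subset_insert _ _))
  · intro h
    induction h with
    | r h => exact scr_sc h
    | lp hm _ ih => exact SC.pL hm ih
    | le hm hk _ ih => exact SC.eL hm (scr_sc hk) ih
end

section
/- In the linear Dolev-Yao system L, every sequent occurring in a derivation of Γ ⊢ M lies within the subterm closure of Γ ∪ {M}: if Γ' ⊢ M' occurs in a derivation of Γ ⊢ M, then Γ' ∪ {M'} ⊆ st(Γ ∪ {M}), where st(S) denotes the set of all subterms of messages in S. -/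
open Msg

/-- Derivations in the linear system L. -/
inductive LDeriv : Set Msg → Msg → Type
  | r  {Γ M} : SCR Γ M → LDeriv Γ M
  | lp {Γ M N T} : pair M N ∈ Γ →
      LDeriv (insert M (insert N Γ)) T → LDeriv Γ T
  | le {Γ M K T} : enc M K ∈ Γ → SCR Γ K →
      LDeriv (insert M (insert K Γ)) T → LDeriv Γ T

/-- The sequent Γ' ⊢ M' occurs in a linear derivation. -/
def occursIn (Γ' : Set Msg) (M' : Msg) : ∀ {Γ M}, LDeriv Γ M → Prop
  | Γ, M, .r _ => Γ' = Γ ∧ M' = M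
  | Γ, M, .lp _ d => (Γ' = Γ ∧ M' = M) ∨ occursIn Γ' M' d
  | Γ, M, .le _ _ d => (Γ' = Γ ∧ M' = M) ∨ occursIn Γ' M' d

/-- Subterm relation on messages. -/
inductive Subterm : Msg → Msg → Prop
  | refl (M) : Subterm M M
  | pairL {t M N} : Subterm t M → Subterm t (pair M N)
  | pairR {t M N} : Subterm t N → Subterm t (pair M N)
  | encL {t M K} : Subterm t M → Subterm t (enc M K)
  | encR {t M K} : Subterm t K → Subterm t (enc M K)

/-- Subterm closure of a set of messages. -/
def st (S : Set Msg) : Set Msg := {t | ∃ s ∈ S, Subterm t s}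

lemma Subterm.trans {a b c : Msg} (h1 : Subterm a b) (h2 : Subterm b c) :
    Subterm a c := by
  induction h2 with
  | refl => exact h1
  | pairL _ ih => exact Subterm.pairL ih
  | pairR _ ih => exact Subterm.pairR ih
  | encL _ ih => exact Subterm.encL ih
  | encR _ ih => exact Subterm.encR ih

lemma st_subset {S T : Set Msg} (h : ∀ s ∈ S, s ∈ st T) : st S ⊆ st T := by
  rintro t ⟨s, hs, hts⟩
  obtain ⟨u, hu, hsu⟩ := h s hs
  exact ⟨u, hu, hts.trans hsu⟩

lemma self_subset_st (S : Set Msg) : S ⊆ st S :=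
  fun s hs => ⟨s, hs, Subterm.refl s⟩

/-- Every sequent occurring in an L-derivation of Γ ⊢ M lies within the
subterm closure of Γ ∪ {M}. -/
theorem linear_subterm_invariant (Γ : Set Msg) (M : Msg) (d : LDeriv Γ M)
    (Γ' : Set Msg) (M' : Msg) (h : occursIn Γ' M' d) :
    Γ' ∪ {M'} ⊆ st (Γ ∪ {M}) := by
  induction d with
  | r _ =>
    obtain ⟨rfl, rfl⟩ := h
    exact self_subset_st _
  | @lp Γ A B T hmem _ ih =>
    rcases h with ⟨rfl, rfl⟩ | h
    · exact self_subset_st _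
    · refine (ih h).trans (st_subset ?_)
      rintro s ((rfl | (rfl | hs)) | rfl)
      · exact ⟨pair s B, Or.inl hmem, Subterm.pairL (Subterm.refl _)⟩
      · exact ⟨pair A s, Or.inl hmem, Subterm.pairR (Subterm.refl _)⟩
      · exact ⟨s, Or.inl hs, Subterm.refl _⟩
      · exact ⟨s, Or.inr rfl, Subterm.refl _⟩
  | @le Γ A K T hmem _ _ ih =>
    rcases h with ⟨rfl, rfl⟩ | h
    · exact self_subset_st _
    · refine (ih h).trans (st_subset ?_)
      rintro s ((rfl | (rfl | hs)) | rfl)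
      · exact ⟨enc s K, Or.inl hmem, Subterm.encL (Subterm.refl _)⟩
      · exact ⟨enc A s, Or.inl hmem, Subterm.encR (Subterm.refl _)⟩
      · exact ⟨s, Or.inl hs, Subterm.refl _⟩
      · exact ⟨s, Or.inr rfl, Subterm.refl _⟩
end
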